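/- arXiv:1701.03559 — 7 statements merged into one kernel-verified Lean document; each statement's English description precedes it below -/
import Mathlib

section
/- Let ρ be a discrete polymatroid rank function on {1,…,r} with k = ρ({1,…,r}), and let I_D be the generalized index coding problem constructed from ρ. If there exists a perfect linear index code of dimension n over F_2 for I_D, i.e. a linear index code of length n·Σ_{i=1}^r ρ({i}) over F_2 solving I_D, then the discrete polymatroid nD is representable over F_2: there exist subspaces V_1,…,V_r of a finite-dimensional F_2-vector space such that dim(Σ_{i∈S} V_i) = n·ρ(S) for all S ⊆ {1,…,r}. -/
/-- `ρ` is a discrete polymatroid rank function: normalized, monotone and submodular. -/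
def DPRankFn {r : ℕ} (ρ : Finset (Fin r) → ℕ) : Prop :=
  ρ ∅ = 0 ∧ (∀ A B : Finset (Fin r), A ⊆ B → ρ A ≤ ρ B) ∧
    ∀ A B : Finset (Fin r), ρ (A ∪ B) + ρ (A ∩ B) ≤ ρ A + ρ B

/-- Membership in the discrete polymatroid associated to `ρ`:
`u ∈ D ↔ Σ_{i ∈ A} u i ≤ ρ A` for every `A`. -/
def MemDP {r : ℕ} (ρ : Finset (Fin r) → ℕ) (u : Fin r → ℕ) : Prop :=
  ∀ A : Finset (Fin r), ∑ i ∈ A, u i ≤ ρ A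

/-- A basis vector of the discrete polymatroid: a maximal element of `D`. -/
def IsBasisVec {r : ℕ} (ρ : Finset (Fin r) → ℕ) (b : Fin r → ℕ) : Prop :=
  MemDP ρ b ∧ ∀ v : Fin r → ℕ, MemDP ρ v → b ≤ v → v = b

/-- A minimal excluded vector of the discrete polymatroid. -/
def IsMinExcludedVec {r : ℕ} (ρ : Finset (Fin r) → ℕ) (c : Fin r → ℕ) : Prop :=
  ¬ MemDP ρ c ∧ (∀ i : Fin r, c i ≤ ρ {i}) ∧
    ∀ v : Fin r → ℕ, v ≤ c → ¬ MemDP ρ v → v = c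

/-- The message tuples of the problem `I_D` constructed from `ρ`, with messages of
dimension `n` over `F`: the messages `x_1, …, x_k` (`k = ρ {1,…,r}`) and, for each
`i`, the messages `y_i^1, …, y_i^{ρ{i}}`. -/
abbrev DPMsg {r : ℕ} (ρ : Finset (Fin r) → ℕ) (n : ℕ) (F : Type*) : Type _ :=
  (Fin (ρ Finset.univ) → Fin n → F) × ((i : Fin r) → Fin (ρ {i}) → Fin n → F)

/-- `f` solves the generalized index coding problem `I_D` constructed from `ρ`:
every receiver of the three types `R1` (basis-vector receivers demanding some `x_j`
with side information a choice of `b_i` messages from each `ζ_i`), `R2`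
(minimal-excluded-vector receivers demanding `y_j^p` with the single coded sum as side
information) and `R3` (receivers demanding `y_i^p` knowing all of `x`) can compute its
demand from its side information together with `f`. -/
def SolvesDP {r n l : ℕ} {F : Type*} [Field F] (ρ : Finset (Fin r) → ℕ)
    (f : DPMsg ρ n F → (Fin l → F)) : Prop :=
  (∀ b : Fin r → ℕ, IsBasisVec ρ b → ∀ j : Fin (ρ Finset.univ),
    ∀ η : (i : Fin r) → Finset (Fin (ρ {i})), (∀ i : Fin r, (η i).card = b i) →
    ∃ ψ : ((i : Fin r) → {p // p ∈ η i} → Fin n → F) → (Fin l → F) → (Fin n → F),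
      ∀ z : DPMsg ρ n F, ψ (fun i p => z.2 i p) (f z) = z.1 j) ∧
  (∀ c : Fin r → ℕ, IsMinExcludedVec ρ c → ∀ j : Fin r, c j ≠ 0 → ∀ p : Fin (ρ {j}),
    ∀ η : (i : Fin r) → Finset (Fin (ρ {i})),
      (∀ i : Fin r, i ≠ j → (η i).card = c i) → p ∉ η j → (η j).card = c j - 1 →
    ∃ ψ : (Fin n → F) → (Fin l → F) → (Fin n → F),
      ∀ z : DPMsg ρ n F, ψ (∑ i : Fin r, ∑ q ∈ η i, z.2 i q) (f z) = z.2 j p) ∧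
  (∀ (i : Fin r) (p : Fin (ρ {i})),
    ∃ ψ : (Fin (ρ Finset.univ) → Fin n → F) → (Fin l → F) → (Fin n → F),
      ∀ z : DPMsg ρ n F, ψ z.1 (f z) = z.2 i p)

section PolyLemmas

lemma memDP_zero {r : ℕ} {ρ : Finset (Fin r) → ℕ} : MemDP ρ (fun _ => 0) := by
  intro A; simp

lemma sum_lt_of_le_of_ne {r : ℕ} {v c : Fin r → ℕ} (hle : v ≤ c) (hne : v ≠ c) :
    ∑ i, v i < ∑ i, c i := by
  have ⟨j, hj⟩ : ∃ j, v j ≠ c j := by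
    by_contra h; push_neg at h; exact hne (funext h)
  exact Finset.sum_lt_sum (fun i _ => hle i) ⟨j, Finset.mem_univ j, lt_of_le_of_ne (hle j) hj⟩

/-- every excluded vector (with coordinates below singleton ranks) dominates a
minimal excluded vector -/
lemma exists_minExcluded_le {r : ℕ} {ρ : Finset (Fin r) → ℕ} :
    ∀ c : Fin r → ℕ, (∀ i, c i ≤ ρ {i}) → ¬ MemDP ρ c →
      ∃ c', IsMinExcludedVec ρ c' ∧ c' ≤ c := by
  have H : ∀ m : ℕ, ∀ c : Fin r → ℕ, ∑ i, c i ≤ m → (∀ i, c i ≤ ρ {i}) → ¬ MemDP ρ c →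
      ∃ c', IsMinExcludedVec ρ c' ∧ c' ≤ c := by
    intro m
    induction m with
    | zero =>
      intro c hsum hbd hnm
      have hc0 : ∀ i, c i = 0 := by
        intro i
        have h1 : c i ≤ ∑ j, c j := Finset.single_le_sum (fun j _ => Nat.zero_le (c j)) (Finset.mem_univ i)
        omega
      exact ⟨c, ⟨hnm, hbd, fun v hv hnv => le_antisymm hv (fun i => by rw [hc0 i]; exact Nat.zero_le _)⟩, le_refl c⟩
    | succ m ih =>
      intro c hsum hbd hnm
      by_cases hmin : ∀ v : Fin r → ℕ, v ≤ c → ¬ MemDP ρ v → v = c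
      · exact ⟨c, ⟨hnm, hbd, hmin⟩, le_refl c⟩
      · push_neg at hmin
        obtain ⟨v, hvle, hvnm, hvne⟩ := hmin
        have hlt := sum_lt_of_le_of_ne hvle hvne
        obtain ⟨c', hc', hle'⟩ := ih v (by omega) (fun i => le_trans (hvle i) (hbd i)) hvnm
        exact ⟨c', hc', le_trans hle' hvle⟩
  exact fun c => H (∑ i, c i) c le_rfl

lemma tight_union {r : ℕ} {ρ : Finset (Fin r) → ℕ} (hρ : DPRankFn ρ) {b : Fin r → ℕ}
    (hb : MemDP ρ b) {A B : Finset (Fin r)} (hA : ∑ i ∈ A, b i = ρ A)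
    (hB : ∑ i ∈ B, b i = ρ B) : ∑ i ∈ A ∪ B, b i = ρ (A ∪ B) := by
  have hsub := hρ.2.2 A B
  have h1 : ∑ i ∈ A ∪ B, b i + ∑ i ∈ A ∩ B, b i = ∑ i ∈ A, b i + ∑ i ∈ B, b i :=
    Finset.sum_union_inter
  have h2 := hb (A ∪ B)
  have h3 := hb (A ∩ B)
  omega

/-- greedy construction: a vector in D supported on A with A-sum equal to ρ A -/
lemma exists_greedy {r : ℕ} {ρ : Finset (Fin r) → ℕ} (hρ : DPRankFn ρ) (A : Finset (Fin r)) :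
    ∃ v : Fin r → ℕ, MemDP ρ v ∧ (∀ i ∉ A, v i = 0) ∧ ∑ i ∈ A, v i = ρ A := by
  classical
  induction A using Finset.induction with
  | empty => exact ⟨fun _ => 0, memDP_zero, fun _ _ => rfl, by simp [hρ.1]⟩
  | @insert a A ha ih =>
    obtain ⟨v, hv, hsupp, hsum⟩ := ih
    set t := ρ (insert a A) - ρ A with ht
    have hmono := hρ.2.1 A (insert a A) (Finset.subset_insert a A)
    refine ⟨fun i => v i + if i = a then t else 0, ?_, ?_, ?_⟩
    · intro B
      by_cases haB : a ∈ B
      · have hsplit : ∑ i ∈ B, (v i + if i = a then t else 0) = (∑ i ∈ B, v i) + t := by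
          rw [Finset.sum_add_distrib, Finset.sum_ite_eq' B a (fun _ => t), if_pos haB]
        rw [hsplit]
        have hvB : ∑ i ∈ B, v i = ∑ i ∈ B ∩ A, v i := by
          apply (Finset.sum_subset (Finset.inter_subset_left)
            (fun x hxB hx => ?_)).symm
          exact hsupp x (fun hxA => hx (Finset.mem_inter.mpr ⟨hxB, hxA⟩))
        have hvBA : ∑ i ∈ B ∩ A, v i ≤ ρ (B ∩ A) := hv (B ∩ A)
        -- submodularity between A and (B ∩ A) ∪ {a}
        have hsub := hρ.2.2 A (insert a (B ∩ A))
        have hu : A ∪ insert a (B ∩ A) = insert a A := by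
          ext x; simp only [Finset.mem_union, Finset.mem_insert, Finset.mem_inter]; tauto
        have hi : A ∩ insert a (B ∩ A) = B ∩ A := by
          ext x
          simp only [Finset.mem_inter, Finset.mem_insert]
          constructor
          · rintro ⟨hxA, hx | ⟨hxB, _⟩⟩
            · exact absurd (hx ▸ hxA) ha
            · exact ⟨hxB, hxA⟩
          · rintro ⟨hxB, hxA⟩; exact ⟨hxA, Or.inr ⟨hxB, hxA⟩⟩
        rw [hu, hi] at hsub
        have hmono2 := hρ.2.1 (insert a (B ∩ A)) B (by
          intro x hx
          rcases Finset.mem_insert.mp hx with h | h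
          · exact h ▸ haB
          · exact (Finset.mem_inter.mp h).1)
        rw [hvB]
        omega
      · have hsplit : ∑ i ∈ B, (v i + if i = a then t else 0) = ∑ i ∈ B, v i := by
          rw [Finset.sum_add_distrib, Finset.sum_ite_eq' B a (fun _ => t), if_neg haB, add_zero]
        rw [hsplit]; exact hv B
    · intro i hi
      have h1 : i ∉ A := fun h => hi (Finset.mem_insert_of_mem h)
      have h2 : i ≠ a := fun h => hi (h ▸ Finset.mem_insert_self a A)
      simp [hsupp i h1, h2]
    · rw [Finset.sum_insert ha, Finset.sum_add_distrib, Finset.sum_ite_eq' A a (fun _ => t),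
        if_neg ha, add_zero, if_pos rfl, hsupp a ha, hsum]
      omega

/-- every member of D extends to a basis vector -/
lemma exists_basis_ext {r : ℕ} {ρ : Finset (Fin r) → ℕ} (hρ : DPRankFn ρ) :
    ∀ v : Fin r → ℕ, MemDP ρ v → ∃ b, IsBasisVec ρ b ∧ v ≤ b := by
  have H : ∀ m : ℕ, ∀ v : Fin r → ℕ, MemDP ρ v → ρ Finset.univ - ∑ i, v i ≤ m →
      ∃ b, IsBasisVec ρ b ∧ v ≤ b := by
    intro m
    induction m with
    | zero =>
      intro v hv hm
      have hs : ∑ i, v i = ρ Finset.univ := le_antisymm (hv Finset.univ) (by omega)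
      refine ⟨v, ⟨hv, fun w hw hle => le_antisymm (fun i => ?_) hle⟩, le_refl v⟩
      by_contra hgt
      push_neg at hgt
      have : ∑ i, v i < ∑ i, w i :=
        Finset.sum_lt_sum (fun i _ => hle i) ⟨i, Finset.mem_univ i, hgt⟩
      have := hw Finset.univ
      omega
    | succ m ih =>
      intro v hv hm
      by_cases hmax : ∀ w : Fin r → ℕ, MemDP ρ w → v ≤ w → w = v
      · exact ⟨v, ⟨hv, hmax⟩, le_refl v⟩
      · push_neg at hmax
        obtain ⟨w, hw, hle, hne⟩ := hmax
        have h1 : ∑ i, v i < ∑ i, w i :=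
          sum_lt_of_le_of_ne hle (fun h => hne h.symm)
        obtain ⟨b, hb, hb2⟩ := ih w hw (by have := hw Finset.univ; omega)
        exact ⟨b, hb, le_trans hle hb2⟩
  exact fun v hv => H _ v hv le_rfl

/-- a basis vector extending the greedy vector for S -/
lemma exists_basis_sum_eq {r : ℕ} {ρ : Finset (Fin r) → ℕ} (hρ : DPRankFn ρ)
    (S : Finset (Fin r)) :
    ∃ b, IsBasisVec ρ b ∧ ∑ i ∈ S, b i = ρ S ∧ ∑ i, b i = ρ Finset.univ := by
  classical
  obtain ⟨v, hv, hsupp, hsum⟩ := exists_greedy hρ S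
  obtain ⟨b, hb, hvb⟩ := exists_basis_ext hρ v hv
  have hS : ∑ i ∈ S, b i = ρ S := by
    have h1 : ∑ i ∈ S, v i ≤ ∑ i ∈ S, b i := Finset.sum_le_sum (fun i _ => hvb i)
    have h2 := hb.1 S
    omega
  refine ⟨b, hb, hS, ?_⟩
  -- maximality forces the total sum to be ρ univ
  by_contra hne
  have hlt : ∑ i, b i < ρ Finset.univ := lt_of_le_of_ne (hb.1 Finset.univ) hne
  -- for each a, b + e_a is excluded, yielding a tight set containing a
  have hAa : ∀ a : Fin r, ∃ A : Finset (Fin r), a ∈ A ∧ ∑ i ∈ A, b i = ρ A := by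
    intro a
    set w : Fin r → ℕ := fun i => b i + if i = a then 1 else 0 with hw
    have hwb : b ≤ w := fun i => by simp [hw]
    have hwne : w ≠ b := by
      intro h
      have := congrFun h a
      simp [hw] at this
    have hwnm : ¬ MemDP ρ w := fun h => hwne (hb.2 w h hwb)
    simp only [MemDP, not_forall, not_le] at hwnm
    obtain ⟨A, hA⟩ := hwnm
    have hsplit : ∑ i ∈ A, w i = ∑ i ∈ A, b i + if a ∈ A then 1 else 0 := by
      rw [hw]; rw [Finset.sum_add_distrib, Finset.sum_ite_eq' A a (fun _ => 1)]
    have haA : a ∈ A := by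
      by_contra h
      rw [hsplit, if_neg h, add_zero] at hA
      exact absurd (hb.1 A) (not_le.mpr hA)
    rw [hsplit, if_pos haA] at hA
    exact ⟨A, haA, le_antisymm (hb.1 A) (by omega)⟩
  choose A hmem htight using hAa
  -- the union of the tight sets is tight and is univ
  have hUnion : ∀ t : Finset (Fin r), ∑ i ∈ t.sup A, b i = ρ (t.sup A) := by
    intro t
    induction t using Finset.induction with
    | empty => simp [hρ.1]
    | @insert a t ha ih =>
      rw [Finset.sup_insert]
      exact tight_union hρ hb.1 (htight a) ih
  have huniv : Finset.univ.sup A = Finset.univ :=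
    Finset.eq_univ_iff_forall.mpr (fun a => Finset.mem_sup.mpr ⟨a, Finset.mem_univ a, hmem a⟩)
  have := hUnion Finset.univ
  rw [huniv] at this
  omega

end PolyLemmas

section Helpers
open Module
variable {K V W : Type*} [Field K] [AddCommGroup V] [Module K V] [AddCommGroup W] [Module K W]

lemma finrank_finsetSum_le [FiniteDimensional K V] {ι : Type*} (s : Finset ι)
    (p : ι → Submodule K V) :
    finrank K (∑ i ∈ s, p i : Submodule K V) ≤ ∑ i ∈ s, finrank K (p i) := by
  classical
  induction s using Finset.induction with
  | empty => simp; exact finrank_bot K V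
  | @insert a s ha ih =>
    rw [Finset.sum_insert ha, Finset.sum_insert ha]
    calc finrank K ((p a + ∑ i ∈ s, p i : Submodule K V)) ≤
        finrank K (p a) + finrank K (∑ i ∈ s, p i : Submodule K V) := by
          have := Submodule.finrank_sup_add_finrank_inf_eq (p a) (∑ i ∈ s, p i)
          have h2 : (p a + ∑ i ∈ s, p i : Submodule K V) = p a ⊔ ∑ i ∈ s, p i := rfl
          rw [h2]
          omega
      _ ≤ _ := by omega

lemma map_finsetSum_submodule (f : V →ₗ[K] W) {ι : Type*} (s : Finset ι) (p : ι → Submodule K V) :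
    Submodule.map f (∑ i ∈ s, p i) = ∑ i ∈ s, Submodule.map f (p i) := by
  classical
  induction s using Finset.induction with
  | empty => simp
  | @insert a s ha ih =>
    rw [Finset.sum_insert ha, Finset.sum_insert ha, ← ih]
    exact Submodule.map_sup _ _ _

lemma range_finsetSum_le {ι : Type*} (s : Finset ι) (φ : ι → (V →ₗ[K] W)) :
    LinearMap.range (∑ i ∈ s, φ i) ≤ ∑ i ∈ s, LinearMap.range (φ i) := by
  rintro x ⟨v, rfl⟩
  rw [LinearMap.sum_apply]
  exact Submodule.sum_mem _ (fun i hi =>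
    Finset.single_le_sum (f := fun i => LinearMap.range (φ i))
      (fun j _ => zero_le) hi ⟨v, rfl⟩)

lemma dualMap_finsetSum {ι : Type*} (s : Finset ι) (φ : ι → (V →ₗ[K] W)) :
    (∑ i ∈ s, φ i).dualMap = ∑ i ∈ s, (φ i).dualMap := by
  ext ψ x
  simp [LinearMap.sum_apply, LinearMap.dualMap_apply, map_sum]

end Helpers

section DPBounds
open Module
variable {K W : Type*} [Field K] [AddCommGroup W] [Module K W]

theorem dp_bounds {r n : ℕ} (hn : 0 < n) (ρ : Finset (Fin r) → ℕ) (hρ : DPRankFn ρ)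
    [FiniteDimensional K W]
    (U : (i : Fin r) → Fin (ρ {i}) → Submodule K W)
    (hdimW : finrank K W = ρ Finset.univ * n)
    (hUfin : ∀ i q, finrank K (U i q) ≤ n)
    (hexcl : ∀ c', IsMinExcludedVec ρ c' → ∀ j, c' j ≠ 0 → ∀ p,
      ∀ η'' : (i : Fin r) → Finset (Fin (ρ {i})),
      (∀ i, i ≠ j → (η'' i).card = c' i) → p ∉ η'' j → (η'' j).card = c' j - 1 →
      U j p ≤ ∑ i, ∑ q ∈ η'' i, U i q)
    (hbasis : ∀ b, IsBasisVec ρ b → ∀ η : (i : Fin r) → Finset (Fin (ρ {i})),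
      (∀ i, (η i).card = b i) → (⊤ : Submodule K W) ≤ ∑ i, ∑ q ∈ η i, U i q) :
    ∀ S : Finset (Fin r),
      finrank K (∑ i ∈ S, ∑ q, U i q : Submodule K W) = n * ρ S := by
  classical
  intro S
  have hupper : finrank K (∑ i ∈ S, ∑ q, U i q : Submodule K W) ≤ n * ρ S := by
    have hex : ∃ m : ℕ, ∃ η : (i : Fin r) → Finset (Fin (ρ {i})),
        ((∀ i, i ∉ S → η i = ∅) ∧ (∑ i, ∑ q ∈ η i, U i q) = ∑ i ∈ S, ∑ q, U i q) ∧
        (∑ i, (η i).card) = m := by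
      refine ⟨_, fun i => if i ∈ S then Finset.univ else ∅,
        ⟨fun i hi => by simp [hi], ?_⟩, rfl⟩
      rw [← Finset.sum_subset (Finset.subset_univ S) (fun i _ hi => by simp [hi])]
      exact Finset.sum_congr rfl (fun i hi => by simp [hi])
    obtain ⟨η, ⟨hηsupp, hηsum⟩, hηcard⟩ := Nat.find_spec hex
    have hcS : ∑ i ∈ S, (η i).card ≤ ρ S := by
      by_contra hcS
      push_neg at hcS
      have hcbd : ∀ i, (η i).card ≤ ρ {i} := by
        intro i
        have h1 := Finset.card_le_univ (η i)
        simpa [Fintype.card_fin] using h1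
      have hcnm : ¬ MemDP ρ (fun i => (η i).card) :=
        fun hmem => absurd (hmem S) (not_le.mpr hcS)
      obtain ⟨c', hc'min, hc'le⟩ :=
        exists_minExcluded_le (fun i => (η i).card) hcbd hcnm
      have hch : ∀ i, ∃ t, t ⊆ η i ∧ t.card = c' i := by
        intro i
        obtain ⟨t, ht1, ht2⟩ := Finset.exists_subset_card_eq (hc'le i)
        exact ⟨t, ht1, ht2⟩
      choose η' hη'sub hη'card using hch
      obtain ⟨j, hj⟩ : ∃ j, c' j ≠ 0 := by
        by_contra hall
        push_neg at hall
        exact hc'min.1 (fun A => by simp [hall])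
      have hjS : j ∈ S := by
        by_contra hjS
        have he : η j = ∅ := hηsupp j hjS
        have h1 : c' j ≤ (η j).card := hc'le j
        simp only [he, Finset.card_empty] at h1
        omega
      have hpex : (η' j).Nonempty := Finset.card_pos.mp (by rw [hη'card]; omega)
      obtain ⟨p, hp⟩ := hpex
      have hpη : p ∈ η j := hη'sub j hp
      set η'' := Function.update η' j ((η' j).erase p) with hη''def
      have h1 : ∀ i, i ≠ j → (η'' i).card = c' i := fun i hi => by
        rw [hη''def, Function.update_of_ne hi]; exact hη'card i
      have h2 : p ∉ η'' j := by
        rw [hη''def, Function.update_self]; exact Finset.notMem_erase p _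
      have h3 : (η'' j).card = c' j - 1 := by
        rw [hη''def, Function.update_self, Finset.card_erase_of_mem hp, hη'card]
      have hUjp := hexcl c' hc'min j hj p η'' h1 h2 h3
      -- the reduced family
      set ηred := Function.update η j ((η j).erase p) with hηreddef
      have hη''red : ∀ i, η'' i ⊆ ηred i := by
        intro i
        by_cases hij : i = j
        · subst hij
          rw [hη''def, hηreddef, Function.update_self, Function.update_self]
          exact Finset.erase_subset_erase p (hη'sub i)
        · rw [hη''def, hηreddef, Function.update_of_ne hij, Function.update_of_ne hij]
          exact hη'sub i
      have hUjp' : U j p ≤ ∑ i, ∑ q ∈ ηred i, U i q :=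
        le_trans hUjp (Finset.sum_le_sum (fun i _ =>
          Finset.sum_le_sum_of_subset (hη''red i)))
      have hsplitη : (∑ i, ∑ q ∈ η i, U i q) = U j p + ∑ i, ∑ q ∈ ηred i, U i q := by
        rw [← Finset.add_sum_erase Finset.univ _ (Finset.mem_univ j),
          ← Finset.add_sum_erase Finset.univ
            (fun i => ∑ q ∈ ηred i, U i q) (Finset.mem_univ j)]
        rw [hηreddef, Function.update_self,
          ← Finset.add_sum_erase (η j) (fun q => U j q) hpη]
        rw [add_assoc]
        congr 1
        congr 1
        refine Finset.sum_congr rfl (fun i hi => ?_)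
        rw [Function.update_of_ne (Finset.ne_of_mem_erase hi)]
      have hredsum : (∑ i, ∑ q ∈ ηred i, U i q) = ∑ i ∈ S, ∑ q, U i q := by
        rw [← hηsum, hsplitη]
        have hsup : U j p ⊔ (∑ i, ∑ q ∈ ηred i, U i q) = ∑ i, ∑ q ∈ ηred i, U i q :=
          sup_eq_right.mpr hUjp'
        exact hsup.symm
      have hredsupp : ∀ i, i ∉ S → ηred i = ∅ := by
        intro i hi
        have hij : i ≠ j := fun h => hi (h ▸ hjS)
        rw [hηreddef, Function.update_of_ne hij]
        exact hηsupp i hi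
      have hcards : ∑ i, (ηred i).card < ∑ i, (η i).card := by
        rw [← Finset.add_sum_erase Finset.univ (fun i => (ηred i).card) (Finset.mem_univ j),
          ← Finset.add_sum_erase Finset.univ (fun i => (η i).card) (Finset.mem_univ j)]
        have heq : ∑ i ∈ Finset.univ.erase j, (ηred i).card
            = ∑ i ∈ Finset.univ.erase j, (η i).card := by
          refine Finset.sum_congr rfl (fun i hi => ?_)
          rw [hηreddef, Function.update_of_ne (Finset.ne_of_mem_erase hi)]
        rw [heq, hηreddef, Function.update_self, Finset.card_erase_of_mem hpη]
        have hpos : 0 < (η j).card := Finset.card_pos.mpr ⟨p, hpη⟩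
        omega
      have hmin := Nat.find_min' hex ⟨ηred, ⟨hredsupp, hredsum⟩, rfl⟩
      omega
    rw [← hηsum]
    calc finrank K (∑ i, ∑ q ∈ η i, U i q : Submodule K W)
        ≤ ∑ i, finrank K (∑ q ∈ η i, U i q : Submodule K W) :=
          finrank_finsetSum_le _ _
      _ ≤ ∑ i, ∑ q ∈ η i, finrank K (U i q) :=
          Finset.sum_le_sum (fun i _ => finrank_finsetSum_le _ _)
      _ ≤ ∑ i, (η i).card * n := by
          refine Finset.sum_le_sum (fun i _ => ?_)
          calc ∑ q ∈ η i, finrank K (U i q) ≤ ∑ _q ∈ η i, n :=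
              Finset.sum_le_sum (fun q _ => hUfin i q)
            _ = (η i).card * n := by rw [Finset.sum_const, smul_eq_mul]
      _ = ∑ i ∈ S, (η i).card * n := by
          refine (Finset.sum_subset (Finset.subset_univ S) (fun i _ hi => ?_)).symm
          rw [hηsupp i hi]
          simp
      _ ≤ ρ S * n := by
          rw [← Finset.sum_mul]
          exact Nat.mul_le_mul_right n hcS
      _ = n * ρ S := mul_comm _ _
  have hlower : n * ρ S ≤ finrank K (∑ i ∈ S, ∑ q, U i q : Submodule K W) := by
    obtain ⟨b, hb, hbS, hbU⟩ := exists_basis_sum_eq hρ S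
    have hbd : ∀ i, b i ≤ ρ {i} := by
      intro i
      have h1 := hb.1 {i}
      simpa using h1
    have hch : ∀ i : Fin r, ∃ t : Finset (Fin (ρ {i})), t.card = b i := by
      intro i
      obtain ⟨t, _, ht⟩ := Finset.exists_subset_card_eq
        (le_trans (hbd i) (by simp : ρ {i} ≤ (Finset.univ : Finset (Fin (ρ {i}))).card))
      exact ⟨t, ht⟩
    choose η hηcard using hch
    have htople := hbasis b hb η hηcard
    -- split over S and its complement
    have hsplitAB : (⊤ : Submodule K W)
        ≤ (∑ i ∈ S, ∑ q, U i q) ⊔ (∑ i ∈ Sᶜ, ∑ q ∈ η i, U i q) := by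
      refine le_trans htople ?_
      rw [← Finset.sum_add_sum_compl S (fun i => ∑ q ∈ η i, U i q)]
      have hle1 : (∑ i ∈ S, ∑ q ∈ η i, U i q) ≤ ∑ i ∈ S, ∑ q, U i q :=
        Finset.sum_le_sum (fun i _ =>
          Finset.sum_le_sum_of_subset (Finset.subset_univ (η i)))
      exact sup_le_sup hle1 le_rfl
    have hBbd : finrank K (∑ i ∈ Sᶜ, ∑ q ∈ η i, U i q : Submodule K W)
        ≤ (∑ i ∈ Sᶜ, b i) * n := by
      calc finrank K (∑ i ∈ Sᶜ, ∑ q ∈ η i, U i q : Submodule K W)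
          ≤ ∑ i ∈ Sᶜ, finrank K (∑ q ∈ η i, U i q : Submodule K W) :=
            finrank_finsetSum_le _ _
        _ ≤ ∑ i ∈ Sᶜ, (η i).card * n := by
            refine Finset.sum_le_sum (fun i _ => ?_)
            calc finrank K (∑ q ∈ η i, U i q : Submodule K W)
                ≤ ∑ q ∈ η i, finrank K (U i q) := finrank_finsetSum_le _ _
              _ ≤ ∑ _q ∈ η i, n := Finset.sum_le_sum (fun q _ => hUfin i q)
              _ = (η i).card * n := by rw [Finset.sum_const, smul_eq_mul]
        _ = (∑ i ∈ Sᶜ, b i) * n := by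
            rw [← Finset.sum_mul]
            congr 1
            exact Finset.sum_congr rfl (fun i _ => hηcard i)
    have hABfin : finrank K W
        ≤ finrank K (∑ i ∈ S, ∑ q, U i q : Submodule K W) + (∑ i ∈ Sᶜ, b i) * n := by
      have hh1 := Submodule.finrank_sup_add_finrank_inf_eq
        (∑ i ∈ S, ∑ q, U i q) (∑ i ∈ Sᶜ, ∑ q ∈ η i, U i q)
      have hh2 : finrank K W
          ≤ finrank K ((∑ i ∈ S, ∑ q, U i q) ⊔ (∑ i ∈ Sᶜ, ∑ q ∈ η i, U i q) :
            Submodule K W) := by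
        rw [← finrank_top K W]
        exact Submodule.finrank_mono hsplitAB
      omega
    have hcompl : ρ S + ∑ i ∈ Sᶜ, b i = ρ Finset.univ := by
      have hh1 := Finset.sum_add_sum_compl S b
      omega
    have hmulsplit : ρ S * n + (∑ i ∈ Sᶜ, b i) * n = ρ Finset.univ * n := by
      rw [← add_mul, hcompl]
    rw [hdimW] at hABfin
    have hcm : n * ρ S = ρ S * n := mul_comm _ _
    omega
  exact le_antisymm hupper hlower

end DPBounds

open Module

/-- If the generalized index coding problem `I_D` constructed from a
discrete polymatroid rank function `ρ` admits a perfect linear index code of dimension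
`n` over `F₂`, i.e. a linear solution of length `n · Σ_i ρ {i}`, then the discrete
polymatroid `nD` is representable over `F₂`: there are subspaces `V_1, …, V_r` of a
finite-dimensional `F₂`-vector space with `dim (Σ_{i ∈ S} V_i) = n · ρ S` for all `S`. -/
theorem stmt_1 (r n : ℕ) (hn : 0 < n) (ρ : Finset (Fin r) → ℕ) (hρ : DPRankFn ρ)
    (f : DPMsg ρ n (ZMod 2) →ₗ[ZMod 2] (Fin (n * ∑ i : Fin r, ρ {i}) → ZMod 2))
    (hf : SolvesDP ρ ⇑f) :
    ∃ (N : ℕ) (V : Fin r → Submodule (ZMod 2) (Fin N → ZMod 2)),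
      ∀ S : Finset (Fin r),
        Module.finrank (ZMod 2) ↥(∑ i ∈ S, V i) = n * ρ S := by
  classical
  obtain ⟨hR1, hR2, hR3⟩ := hf
  -- the two component maps of f
  let h := f ∘ₗ LinearMap.inl (ZMod 2) (Fin (ρ Finset.univ) → Fin n → ZMod 2)
      ((i : Fin r) → Fin (ρ {i}) → Fin n → ZMod 2)
  let g := f ∘ₗ LinearMap.inr (ZMod 2) (Fin (ρ Finset.univ) → Fin n → ZMod 2)
      ((i : Fin r) → Fin (ρ {i}) → Fin n → ZMod 2)
  have hsplit : ∀ x y, f (x, y) = h x + g y := by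
    intro x y
    have hxy : (x, y) = ((x, 0) : DPMsg ρ n (ZMod 2)) + ((0, y) : DPMsg ρ n (ZMod 2)) := by
      simp
    rw [hxy, map_add]; rfl
  -- g is injective (type R3 receivers)
  have hginj : Function.Injective g := by
    intro y y' hyy
    funext i p
    obtain ⟨ψ, hψ⟩ := hR3 i p
    have h1 := hψ (0, y)
    have h2 := hψ (0, y')
    simp only at h1 h2
    have heq : f (0, y) = f (0, y') := by
      rw [hsplit, hsplit, hyy]
    rw [heq, h2] at h1
    exact h1.symm
  -- dimension count makes g bijective
  have hdim : finrank (ZMod 2) ((i : Fin r) → Fin (ρ {i}) → Fin n → ZMod 2)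
      = finrank (ZMod 2) (Fin (n * ∑ i : Fin r, ρ {i}) → ZMod 2) := by
    rw [Module.finrank_pi_fintype, Module.finrank_pi]
    simp only [Module.finrank_pi_fintype (R := ZMod 2), Module.finrank_pi, Fintype.card_fin]
    simp [Finset.sum_const, Finset.mul_sum, mul_comm]
  have hgsurj : Function.Surjective g :=
    (LinearMap.injective_iff_surjective_of_finrank_eq_finrank hdim).mp hginj
  let gE := LinearEquiv.ofBijective g ⟨hginj, hgsurj⟩
  let C := gE.symm.toLinearMap ∘ₗ h
  have hgC : ∀ x, g (C x) = h x := fun x => gE.apply_symm_apply (h x)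
  have hfC : ∀ x, f (x, C x) = 0 := by
    intro x
    rw [hsplit, hgC, ← two_smul (ZMod 2) (h x)]
    have h2 : (2 : ZMod 2) = 0 := rfl
    rw [h2, zero_smul]
  -- the block maps and their dual ranges
  let D : (i : Fin r) → Fin (ρ {i}) →
      ((Fin (ρ Finset.univ) → Fin n → ZMod 2) →ₗ[ZMod 2] (Fin n → ZMod 2)) :=
    fun i q => LinearMap.proj q ∘ₗ (LinearMap.proj i ∘ₗ C)
  have hD : ∀ i q x, D i q x = C x i q := fun _ _ _ => rfl
  let U : (i : Fin r) → Fin (ρ {i}) → Submodule (ZMod 2)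
      (Module.Dual (ZMod 2) (Fin (ρ Finset.univ) → Fin n → ZMod 2)) :=
    fun i q => LinearMap.range (D i q).dualMap
  have hUker : ∀ i q, U i q = (LinearMap.ker (D i q)).dualAnnihilator :=
    fun i q => LinearMap.range_dualMap_eq_dualAnnihilator_ker (D i q)
  have hUfin : ∀ i q, finrank (ZMod 2) (U i q) ≤ n := by
    intro i q
    calc finrank (ZMod 2) (U i q)
        ≤ finrank (ZMod 2) (Module.Dual (ZMod 2) (Fin n → ZMod 2)) :=
          LinearMap.finrank_range_le _
      _ = n := by rw [Subspace.dual_finrank_eq, Module.finrank_pi, Fintype.card_fin]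
  -- hypothesis of dp_bounds coming from R2 receivers
  have hexcl : ∀ c', IsMinExcludedVec ρ c' → ∀ j, c' j ≠ 0 → ∀ p,
      ∀ η'' : (i : Fin r) → Finset (Fin (ρ {i})),
      (∀ i, i ≠ j → (η'' i).card = c' i) → p ∉ η'' j → (η'' j).card = c' j - 1 →
      U j p ≤ ∑ i, ∑ q ∈ η'' i, U i q := by
    intro c' hc'min j hj p η'' h1 h2 h3
    obtain ⟨ψ, hψ⟩ := hR2 c' hc'min j hj p η'' h1 h2 h3
    have hkerE : LinearMap.ker (∑ i, ∑ q ∈ η'' i, D i q) ≤ LinearMap.ker (D j p) := by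
      intro x hx
      rw [LinearMap.mem_ker] at hx ⊢
      have hz := hψ (x, C x)
      have hz0 := hψ (0 : DPMsg ρ n (ZMod 2))
      rw [hfC x] at hz
      rw [map_zero] at hz0
      have hEx : (∑ i : Fin r, ∑ q ∈ η'' i, (x, C x).2 i q) = 0 := by
        rw [← hx]
        simp only [LinearMap.sum_apply]
        rfl
      rw [hEx] at hz
      have hz0' : (∑ i : Fin r, ∑ q ∈ η'' i,
          ((0 : DPMsg ρ n (ZMod 2)).2 i q)) = 0 := by
        simp
      rw [hz0'] at hz0
      exact hz.symm.trans hz0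
    rw [hUker j p]
    calc (LinearMap.ker (D j p)).dualAnnihilator
        ≤ (LinearMap.ker (∑ i, ∑ q ∈ η'' i, D i q)).dualAnnihilator :=
          Submodule.dualAnnihilator_anti hkerE
      _ = LinearMap.range (∑ i, ∑ q ∈ η'' i, D i q).dualMap :=
          (LinearMap.range_dualMap_eq_dualAnnihilator_ker _).symm
      _ ≤ ∑ i, ∑ q ∈ η'' i, U i q := by
          rw [dualMap_finsetSum]
          refine le_trans (range_finsetSum_le _ _) (Finset.sum_le_sum ?_)
          intro i _
          rw [dualMap_finsetSum]
          exact range_finsetSum_le _ _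
  -- hypothesis of dp_bounds coming from R1 receivers
  have hbasis : ∀ b, IsBasisVec ρ b → ∀ η : (i : Fin r) → Finset (Fin (ρ {i})),
      (∀ i, (η i).card = b i) →
      (⊤ : Submodule (ZMod 2)
          (Module.Dual (ZMod 2) (Fin (ρ Finset.univ) → Fin n → ZMod 2)))
        ≤ ∑ i, ∑ q ∈ η i, U i q := by
    intro b hb η hηcard
    have hψex := fun j => hR1 b hb j η hηcard
    choose ψ hψ using hψex
    have hinj : ∀ x, (∀ i, ∀ q ∈ η i, D i q x = 0) → x = 0 := by
      intro x hx
      funext j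
      have hz := hψ j (x, C x)
      have hz0 := hψ j (0 : DPMsg ρ n (ZMod 2))
      rw [hfC x] at hz
      rw [map_zero] at hz0
      have harg : (fun i (p : {p // p ∈ η i}) => (x, C x).2 i (p : Fin (ρ {i})))
          = (fun i (p : {p // p ∈ η i}) => (0 : DPMsg ρ n (ZMod 2)).2 i (p : Fin (ρ {i}))) := by
        funext i p
        exact hx i p p.2
      rw [harg] at hz
      exact hz.symm.trans hz0
    have hinf : (⨅ t : Σ i : Fin r, {q : Fin (ρ {i}) // q ∈ η i},
        LinearMap.ker (D t.1 t.2.1)) = ⊥ := by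
      rw [Submodule.eq_bot_iff]
      intro x hx
      rw [Submodule.mem_iInf] at hx
      exact hinj x (fun i q hq => hx ⟨i, q, hq⟩)
    have htop : (⨆ t : Σ i : Fin r, {q : Fin (ρ {i}) // q ∈ η i}, U t.1 t.2.1) = ⊤ := by
      have h1 := Subspace.dualAnnihilator_iInf_eq
        (fun t : Σ i : Fin r, {q : Fin (ρ {i}) // q ∈ η i} => LinearMap.ker (D t.1 t.2.1))
      rw [hinf, Submodule.dualAnnihilator_bot] at h1
      rw [iSup_congr (fun t : Σ i : Fin r, {q : Fin (ρ {i}) // q ∈ η i} =>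
        hUker t.1 t.2.1)]
      exact h1.symm
    rw [← htop]
    refine iSup_le (fun t => ?_)
    obtain ⟨i, q, hq⟩ := t
    refine le_trans ?_ (Finset.single_le_sum
      (f := fun i => ∑ q ∈ η i, U i q) (fun i _ => zero_le) (Finset.mem_univ i))
    exact Finset.single_le_sum (f := fun q => U i q) (fun q _ => zero_le) hq
  -- dimension of the dual space
  have hdimW : finrank (ZMod 2)
      (Module.Dual (ZMod 2) (Fin (ρ Finset.univ) → Fin n → ZMod 2))
      = ρ Finset.univ * n := by
    rw [Subspace.dual_finrank_eq, Module.finrank_pi_fintype, Module.finrank_pi]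
    simp [Finset.sum_const, Fintype.card_fin]
  have hmain := dp_bounds hn ρ hρ U hdimW hUfin hexcl hbasis
  -- transport the subspaces to a standard space
  obtain ⟨e⟩ : Nonempty ((Module.Dual (ZMod 2) (Fin (ρ Finset.univ) → Fin n → ZMod 2))
      ≃ₗ[ZMod 2] (Fin (finrank (ZMod 2)
        (Module.Dual (ZMod 2) (Fin (ρ Finset.univ) → Fin n → ZMod 2))) → ZMod 2)) := by
    apply FiniteDimensional.nonempty_linearEquiv_of_finrank_eq
    rw [Module.finrank_pi, Fintype.card_fin]
  refine ⟨_, fun i => Submodule.map e.toLinearMap (∑ q, U i q), fun S => ?_⟩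
  rw [← map_finsetSum_submodule, LinearEquiv.finrank_map_eq]
  exact hmain S
end

section
/- Let M be a matroid of rank k on the ground set Y = {y_1,…,y_m} and let I_M be the generalized index coding problem constructed from M. Then M is representable over F_2 if and only if there exists a perfect scalar linear index code for I_M over F_2, i.e. a linear index code of length m and dimension 1 over F_2 solving I_M. -/
/-- A matroid on the ground set `{1, …, m}`, given by its independence axioms. -/
structure FinMatroid (m : ℕ) where
  Indep : Finset (Fin m) → Prop
  empty_indep : Indep ∅
  subset_indep : ∀ ⦃I J : Finset (Fin m)⦄, Indep J → I ⊆ J → Indep I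
  exchange : ∀ ⦃I J : Finset (Fin m)⦄, Indep I → Indep J → I.card < J.card →
    ∃ e ∈ J, e ∉ I ∧ Indep (insert e I)

/-- The rank of a subset: the maximum cardinality of an independent subset. -/
noncomputable def FinMatroid.rank {m : ℕ} (M : FinMatroid m) (S : Finset (Fin m)) : ℕ :=
  letI : DecidablePred M.Indep := Classical.decPred _
  (S.powerset.filter M.Indep).sup Finset.card

/-- A basis: a maximal independent set. -/
def FinMatroid.IsBasis {m : ℕ} (M : FinMatroid m) (B : Finset (Fin m)) : Prop :=
  M.Indep B ∧ ∀ I : Finset (Fin m), M.Indep I → B ⊆ I → I = B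

/-- A circuit: a minimal dependent set. -/
def FinMatroid.IsCircuit {m : ℕ} (M : FinMatroid m) (C : Finset (Fin m)) : Prop :=
  ¬ M.Indep C ∧ ∀ D : Finset (Fin m), D ⊂ C → M.Indep D

/-- `M` is representable over `F₂`: some binary matrix `A` with columns indexed by the
ground set satisfies `rank (A_S) = r_M (S)` for every subset `S`. -/
def FinMatroid.RepresentableF2 {m : ℕ} (M : FinMatroid m) : Prop :=
  ∃ (nr : ℕ) (A : Matrix (Fin nr) (Fin m) (ZMod 2)),
    ∀ S : Finset (Fin m),
      (A.submatrix id (fun i : {i // i ∈ S} => (i : Fin m))).rank = M.rank S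

/-- `f` solves the generalized index coding problem `I_M`: every receiver of the three
types `R1` (basis receivers), `R2` (circuit receivers with a coded side-information
sum) and `R3` can compute its demand from its side information together with `f`.
A message tuple is `z = (y, x)` with `y : Fin m → ZMod 2` and `x : Fin k → ZMod 2`. -/
def SolvesIM {m k l : ℕ} (M : FinMatroid m)
    (f : (Fin m → ZMod 2) × (Fin k → ZMod 2) → (Fin l → ZMod 2)) : Prop :=
  (∀ B : Finset (Fin m), M.IsBasis B → ∀ j : Fin k,
    ∃ ψ : ({i // i ∈ B} → ZMod 2) → (Fin l → ZMod 2) → ZMod 2,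
      ∀ z : (Fin m → ZMod 2) × (Fin k → ZMod 2), ψ (fun i => z.1 i) (f z) = z.2 j) ∧
  (∀ C : Finset (Fin m), M.IsCircuit C → ∀ a ∈ C,
    ∃ ψ : ZMod 2 → (Fin l → ZMod 2) → ZMod 2,
      ∀ z : (Fin m → ZMod 2) × (Fin k → ZMod 2), ψ (∑ i ∈ C.erase a, z.1 i) (f z) = z.1 a) ∧
  (∀ i : Fin m, ∃ ψ : (Fin k → ZMod 2) → (Fin l → ZMod 2) → ZMod 2,
      ∀ z : (Fin m → ZMod 2) × (Fin k → ZMod 2), ψ z.2 (f z) = z.1 i)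

open Matrix Submodule Module

/-- rank of a column-submatrix as finrank of the span of the chosen columns. -/
lemma rank_submatrix_eq_finrank {n m : ℕ} (A : Matrix (Fin n) (Fin m) (ZMod 2))
    (S : Finset (Fin m)) :
    (A.submatrix id (fun i : {i // i ∈ S} => (i : Fin m))).rank
      = finrank (ZMod 2) (span (ZMod 2) (Aᵀ '' ↑S)) := by
  rw [Matrix.rank_eq_finrank_span_cols]
  have h1 : (A.submatrix id fun i : {i // i ∈ S} => (i : Fin m)).col
      = fun i : {i // i ∈ S} => Aᵀ (i : Fin m) := rfl
  rw [h1, Set.image_eq_range (Aᵀ : Fin m → Fin n → ZMod 2) (↑S : Set (Fin m))]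
  rfl

/-- For a family of `n` vectors in `(ZMod 2)^n`, linear independence is equivalent to
injectivity of the pairing map. -/
lemma li_iff_inj {n : ℕ} {ι : Type*} [Fintype ι] (hc : Fintype.card ι = n)
    (v : ι → (Fin n → ZMod 2)) :
    LinearIndependent (ZMod 2) v ↔
      Function.Injective (Matrix.of v).mulVecLin := by
  rw [linearIndependent_iff_card_eq_finrank_span, hc]
  rw [← LinearMap.ker_eq_bot, ← Submodule.finrank_eq_zero]
  have hrn := LinearMap.finrank_range_add_finrank_ker (Matrix.of v).mulVecLin
  have hdom : finrank (ZMod 2) (Fin n → ZMod 2) = n := by simp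
  rw [hdom] at hrn
  have hr : finrank (ZMod 2) (LinearMap.range (Matrix.of v).mulVecLin)
      = Set.finrank (ZMod 2) (Set.range v) := by
    have h1 : (Matrix.of v).rank = ((Matrix.of v)ᵀ).rank := (Matrix.rank_transpose _).symm
    have h2 : ((Matrix.of v)ᵀ).rank
        = finrank (ZMod 2) (span (ZMod 2) (Set.range ((Matrix.of v)ᵀᵀ))) :=
      Matrix.rank_eq_finrank_span_cols _
    have h3 : Set.range ((Matrix.of v)ᵀᵀ) = Set.range v := rfl
    rw [h3] at h2
    have h4 : (Matrix.of v).rank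
        = finrank (ZMod 2) (LinearMap.range (Matrix.of v).mulVecLin) := rfl
    rw [← h4, h1, h2]
    rfl
  rw [hr] at hrn
  unfold Set.finrank at hrn ⊢
  omega

lemma finrank_span_image_eq {V V' : Type*} [AddCommGroup V] [Module (ZMod 2) V]
    [AddCommGroup V'] [Module (ZMod 2) V'] (e : V →ₗ[ZMod 2] V')
    (he : Function.Injective e) (s : Set V) :
    finrank (ZMod 2) (span (ZMod 2) (⇑e '' s)) = finrank (ZMod 2) (span (ZMod 2) s) := by
  rw [← Submodule.map_span]
  exact ((Submodule.equivMapOfInjective e he _).symm).finrank_eq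

/-- decomposition of a linear map out of a pi type. -/
lemma pi_linear_eq_sum {k m : ℕ} (N : (Fin k → ZMod 2) →ₗ[ZMod 2] (Fin m → ZMod 2))
    (x : Fin k → ZMod 2) (i : Fin m) :
    N x i = ∑ j, N (Pi.single j 1) i * x j := by
  have hsingle : ∀ j : Fin k, (Pi.single j (1:ZMod 2)) = fun j' => if j = j' then (1:ZMod 2) else 0 :=
    fun j => funext fun j' => by simp [Pi.single_apply, eq_comm]
  rw [LinearMap.pi_apply_eq_sum_univ N x, Finset.sum_apply]
  refine Finset.sum_congr rfl fun j _ => ?_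
  rw [Pi.smul_apply, smul_eq_mul, mul_comm, hsingle j]

namespace FinMatroid

variable {m : ℕ} (M : FinMatroid m)

lemma card_le_rank {I S : Finset (Fin m)} (hIS : I ⊆ S) (hI : M.Indep I) :
    I.card ≤ M.rank S := by
  unfold FinMatroid.rank
  exact Finset.le_sup (by simp [Finset.mem_filter, Finset.mem_powerset, hIS, hI])

lemma rank_le_card (S : Finset (Fin m)) : M.rank S ≤ S.card := by
  unfold FinMatroid.rank
  refine Finset.sup_le fun T hT => ?_
  simp only [Finset.mem_filter, Finset.mem_powerset] at hT
  exact Finset.card_le_card hT.1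

lemma exists_indep_card_eq_rank (S : Finset (Fin m)) :
    ∃ T ⊆ S, M.Indep T ∧ T.card = M.rank S := by
  classical
  unfold FinMatroid.rank
  have hne : ((S.powerset.filter fun T => M.Indep T)).Nonempty := by
    refine ⟨∅, ?_⟩
    simp [Finset.mem_filter, Finset.mem_powerset, M.empty_indep]
  obtain ⟨T, hT, hsup⟩ := Finset.exists_mem_eq_sup _ hne Finset.card
  simp only [Finset.mem_filter, Finset.mem_powerset] at hT
  exact ⟨T, hT.1, hT.2, hsup.symm⟩

lemma rank_of_indep {S : Finset (Fin m)} (hS : M.Indep S) : M.rank S = S.card :=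
  le_antisymm (M.rank_le_card S) (M.card_le_rank (subset_refl S) hS)

lemma rank_lt_card_of_dep {S : Finset (Fin m)} (hS : ¬ M.Indep S) :
    M.rank S < S.card := by
  rcases lt_or_eq_of_le (M.rank_le_card S) with h | h
  · exact h
  · exfalso
    obtain ⟨T, hTS, hT, hcard⟩ := M.exists_indep_card_eq_rank S
    rw [h] at hcard
    rw [Finset.eq_of_subset_of_card_le hTS hcard.ge] at hT
    exact hS hT

/-- Every independent subset of `S` extends to one of full rank. -/
lemma exists_extend {S : Finset (Fin m)} :
    ∀ (n : ℕ) (I : Finset (Fin m)), I ⊆ S → M.Indep I → M.rank S - I.card ≤ n →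
      ∃ J, I ⊆ J ∧ J ⊆ S ∧ M.Indep J ∧ J.card = M.rank S := by
  intro n
  induction n with
  | zero =>
    intro I hIS hI hle
    exact ⟨I, subset_refl I, hIS, hI,
      le_antisymm (M.card_le_rank hIS hI) (by omega)⟩
  | succ n ih =>
    intro I hIS hI hle
    rcases eq_or_lt_of_le (M.card_le_rank hIS hI) with h | h
    · exact ⟨I, subset_refl I, hIS, hI, h⟩
    · obtain ⟨T, hTS, hT, hcard⟩ := M.exists_indep_card_eq_rank S
      obtain ⟨e, heT, heI, hins⟩ := M.exchange hI hT (by omega)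
      obtain ⟨J, hJ1, hJ2, hJ3, hJ4⟩ := ih (insert e I)
        (Finset.insert_subset (hTS heT) hIS) hins
        (by rw [Finset.card_insert_of_notMem heI]; omega)
      exact ⟨J, (Finset.subset_insert e I).trans hJ1, hJ2, hJ3, hJ4⟩

lemma exists_basis_superset {I : Finset (Fin m)} (hI : M.Indep I) :
    ∃ B, I ⊆ B ∧ M.IsBasis B ∧ B.card = M.rank Finset.univ := by
  obtain ⟨J, hIJ, _, hJ, hcard⟩ :=
    M.exists_extend (M.rank Finset.univ) I (Finset.subset_univ I) hI (by omega)
  refine ⟨J, hIJ, ⟨hJ, fun K hK hJK => ?_⟩, hcard⟩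
  refine (Finset.eq_of_subset_of_card_le hJK ?_).symm
  rw [hcard]
  exact M.card_le_rank (Finset.subset_univ K) hK

lemma basis_card {B : Finset (Fin m)} (hB : M.IsBasis B) :
    B.card = M.rank Finset.univ := by
  obtain ⟨J, hBJ, hJS, hJ, hcard⟩ :=
    M.exists_extend (M.rank Finset.univ) B (Finset.subset_univ B) hB.1 (by omega)
  rw [← hB.2 J hJ hBJ]; exact hcard

lemma exists_circuit_subset {D : Finset (Fin m)} (hD : ¬ M.Indep D) :
    ∃ C ⊆ D, M.IsCircuit C := by
  classical
  induction D using Finset.strongInduction with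
  | _ D ih =>
    by_cases h : ∀ E ⊂ D, M.Indep E
    · exact ⟨D, subset_refl D, hD, h⟩
    · push_neg at h
      obtain ⟨E, hED, hE⟩ := h
      obtain ⟨C, hCE, hC⟩ := ih E hED hE
      exact ⟨C, hCE.trans hED.subset, hC⟩

lemma exists_circuit_insert {I : Finset (Fin m)} {a : Fin m} (hI : M.Indep I)
    (hdep : ¬ M.Indep (insert a I)) :
    ∃ C ⊆ insert a I, M.IsCircuit C ∧ a ∈ C := by
  obtain ⟨C, hCsub, hC⟩ := M.exists_circuit_subset hdep
  refine ⟨C, hCsub, hC, ?_⟩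
  by_contra ha
  refine hC.1 (M.subset_indep hI fun x hx => ?_)
  rcases Finset.mem_insert.mp (hCsub hx) with h | h
  · exact absurd (h ▸ hx) ha
  · exact h

end FinMatroid


open Matrix Submodule Module FinMatroid

lemma range_sub_eq_image {α β : Type*} (f : α → β) (S : Finset α) :
    (Set.range fun i : {i // i ∈ S} => f (i : α)) = f '' ↑S := by
  rw [Set.image_eq_range]; rfl

section Bridge
variable {k m : ℕ} (M : FinMatroid m) (A : Matrix (Fin k) (Fin m) (ZMod 2))
variable (hA : ∀ S : Finset (Fin m),
  finrank (ZMod 2) (span (ZMod 2) (Aᵀ '' ↑S)) = M.rank S)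

include hA in
lemma indep_cols_li {S : Finset (Fin m)} (hS : M.Indep S) :
    LinearIndependent (ZMod 2) (fun i : {i // i ∈ S} => Aᵀ (i : Fin m)) := by
  rw [linearIndependent_iff_card_eq_finrank_span]
  unfold Set.finrank
  rw [range_sub_eq_image Aᵀ S, hA S, M.rank_of_indep hS, Fintype.card_coe]

include hA in
lemma circuit_cols_sum_zero {C : Finset (Fin m)} (hC : M.IsCircuit C) :
    ∑ i ∈ C, Aᵀ i = 0 := by
  classical
  have hnLI : ¬ LinearIndependent (ZMod 2) (fun i : {i // i ∈ C} => Aᵀ (i : Fin m)) := by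
    rw [linearIndependent_iff_card_eq_finrank_span]
    unfold Set.finrank
    rw [range_sub_eq_image Aᵀ C, hA C, Fintype.card_coe]
    have := M.rank_lt_card_of_dep hC.1
    omega
  obtain ⟨g, hg0, i0, hi0⟩ := Fintype.not_linearIndependent_iff.mp hnLI
  set g' : Fin m → ZMod 2 := fun a => if h : a ∈ C then g ⟨a, h⟩ else 0 with hg'
  have hgg : ∀ i : {i // i ∈ C}, g' (i : Fin m) = g i := by
    intro i; simp [hg', i.2]
  set S := C.filter (fun a => g' a ≠ 0) with hSdef
  have hSC : S ⊆ C := Finset.filter_subset _ _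
  have hsum : ∑ a ∈ C, g' a • Aᵀ a = 0 := by
    rw [← hg0, ← Finset.sum_attach C (fun a => g' a • Aᵀ a), Finset.univ_eq_attach]
    exact Finset.sum_congr rfl fun i _ => by rw [hgg]
  have hSeq : S = C := by
    by_contra hne
    have hind := hC.2 S (Finset.ssubset_iff_subset_ne.mpr ⟨hSC, hne⟩)
    have hLI := indep_cols_li M A hA hind
    refine Fintype.not_linearIndependent_iff.mpr ?_ hLI
    refine ⟨fun i : {i // i ∈ S} => g' (i : Fin m), ?_, ?_⟩
    · have : ∑ i : {i // i ∈ S}, g' (i : Fin m) • Aᵀ (i : Fin m)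
          = ∑ a ∈ S, g' a • Aᵀ a := by
        rw [Finset.univ_eq_attach, Finset.sum_attach S (fun a => g' a • Aᵀ a)]
      rw [this, hSdef, Finset.sum_filter_of_ne (fun a _ hne0 => ?_), hsum]
      intro h0; rw [h0, zero_smul] at hne0; exact hne0 rfl
    · have hmem0 : (i0 : Fin m) ∈ S := by
        rw [hSdef, Finset.mem_filter]
        refine ⟨i0.2, ?_⟩
        rw [hgg i0]; exact hi0
      refine ⟨⟨(i0 : Fin m), hmem0⟩, ?_⟩
      show g' (i0 : Fin m) ≠ 0
      rw [hgg i0]; exact hi0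
  have hone : ∀ a ∈ C, g' a = (1 : ZMod 2) := by
    intro a ha
    have hmem : a ∈ S := hSeq.symm ▸ ha
    rw [hSdef, Finset.mem_filter] at hmem
    have : ∀ x : ZMod 2, x ≠ 0 → x = 1 := by decide
    exact this _ hmem.2
  calc ∑ i ∈ C, Aᵀ i = ∑ a ∈ C, g' a • Aᵀ a :=
        Finset.sum_congr rfl fun a ha => by rw [hone a ha, one_smul]
    _ = 0 := hsum

end Bridge


section Main
variable {m k : ℕ}

lemma forward_dir (M : FinMatroid m) (hrank : M.rank Finset.univ = k)
    (hrep : M.RepresentableF2) :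
    ∃ f : ((Fin m → ZMod 2) × (Fin k → ZMod 2)) →ₗ[ZMod 2] (Fin m → ZMod 2),
      SolvesIM M ⇑f := by
  classical
  obtain ⟨nr, A, hA⟩ := hrep
  have hA' : ∀ S : Finset (Fin m),
      finrank (ZMod 2) (span (ZMod 2) (Aᵀ '' ↑S)) = M.rank S := by
    intro S; rw [← rank_submatrix_eq_finrank]; exact hA S
  set W : Submodule (ZMod 2) (Fin nr → ZMod 2) :=
    span (ZMod 2) (Aᵀ '' ↑(Finset.univ : Finset (Fin m))) with hWdef
  have hW : finrank (ZMod 2) W = k := by rw [hWdef, hA' Finset.univ, hrank]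
  let b : Basis (Fin k) (ZMod 2) W := (Module.finBasis (ZMod 2) W).reindex (finCongr hW)
  let e : W ≃ₗ[ZMod 2] (Fin k → ZMod 2) := b.equivFun
  have hmemW : ∀ i : Fin m, Aᵀ i ∈ W :=
    fun i => subset_span (Set.mem_image_of_mem _ (by simp))
  let wv : Fin m → W := fun i => ⟨Aᵀ i, hmemW i⟩
  let A' : Matrix (Fin k) (Fin m) (ZMod 2) := Matrix.of fun j i => e (wv i) j
  have hA'T : A'ᵀ = fun i => (e (wv i) : Fin k → ZMod 2) := rfl
  have hA'' : ∀ S : Finset (Fin m),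
      finrank (ZMod 2) (span (ZMod 2) (A'ᵀ '' ↑S)) = M.rank S := by
    intro S
    have h1 : A'ᵀ '' ↑S = ⇑e.toLinearMap '' (wv '' ↑S) := by
      rw [hA'T, ← Set.image_comp]; rfl
    have h2 : Aᵀ '' ↑S = ⇑W.subtype '' (wv '' ↑S) := by
      rw [← Set.image_comp]; rfl
    rw [h1, finrank_span_image_eq e.toLinearMap e.injective]
    rw [← hA' S, h2, finrank_span_image_eq W.subtype (Submodule.injective_subtype W)]
  -- the code
  let F : ((Fin m → ZMod 2) × (Fin k → ZMod 2)) → (Fin m → ZMod 2) :=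
    fun z => fun i => z.1 i + ∑ j, A' j i * z.2 j
  let f : ((Fin m → ZMod 2) × (Fin k → ZMod 2)) →ₗ[ZMod 2] (Fin m → ZMod 2) :=
    { toFun := F
      map_add' := by
        intro z z'
        funext i
        simp only [F, Prod.fst_add, Prod.snd_add, Pi.add_apply, mul_add,
          Finset.sum_add_distrib]
        ring
      map_smul' := by
        intro c z
        funext i
        simp only [F, Prod.smul_fst, Prod.smul_snd, Pi.smul_apply, smul_eq_mul,
          RingHom.id_apply, mul_add, Finset.mul_sum]
        congr 1
        exact Finset.sum_congr rfl fun j _ => by ring }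
  have hf : ∀ z, f z = F z := fun z => rfl
  refine ⟨f, ?_, ?_, ?_⟩
  · -- R1 : basis receivers
    intro B hB j
    have hBcard : B.card = k := by rw [M.basis_card hB, hrank]
    have hcard : Fintype.card {i // i ∈ B} = k := by rw [Fintype.card_coe, hBcard]
    have hLI : LinearIndependent (ZMod 2) (fun i : {i // i ∈ B} => A'ᵀ (i : Fin m)) :=
      indep_cols_li M A' hA'' hB.1
    have hinj := (li_iff_inj hcard _).mp hLI
    set gmap := (Matrix.of fun i : {i // i ∈ B} => A'ᵀ (i : Fin m)).mulVecLin with hgmap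
    refine ⟨fun yB w' => Function.invFun gmap (fun i : {i // i ∈ B} => w' i - yB i) j,
      fun z => ?_⟩
    show Function.invFun gmap
      (fun i : {i // i ∈ B} => f z (i : Fin m) - z.1 (i : Fin m)) j = z.2 j
    have harg : (fun i : {i // i ∈ B} => f z (i : Fin m) - z.1 (i : Fin m)) = gmap z.2 := by
      funext i
      rw [hf]
      simp only [F, hgmap, Matrix.mulVecLin_apply, Matrix.mulVec, dotProduct,
        Matrix.of_apply, add_sub_cancel_left]
      rfl
    rw [harg, Function.leftInverse_invFun hinj z.2]
  · -- R2 : circuit receivers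
    intro C hC a ha
    have hzero : ∑ i ∈ C, A'ᵀ i = 0 := circuit_cols_sum_zero M A' hA'' hC
    have h2 : ∀ j, ∑ i ∈ C, A' j i = 0 := by
      intro j
      have := congrFun hzero j
      exact ((Finset.sum_apply j C (fun i => A'ᵀ i)).symm.trans this : _)
    refine ⟨fun s w' => (∑ i ∈ C, w' i) - s, fun z => ?_⟩
    have hsumf : ∑ i ∈ C, f z i = ∑ i ∈ C, z.1 i := by
      simp only [hf, F, Finset.sum_add_distrib]
      have : ∑ i ∈ C, ∑ j, A' j i * z.2 j = 0 := by
        rw [Finset.sum_comm]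
        refine Finset.sum_eq_zero fun j _ => ?_
        rw [← Finset.sum_mul, h2 j, zero_mul]
      rw [this, add_zero]
    show (∑ i ∈ C, f z i) - (∑ i ∈ C.erase a, z.1 i) = z.1 a
    rw [hsumf, ← Finset.sum_erase_add C _ ha, add_sub_cancel_left]
  · -- R3
    intro i
    refine ⟨fun x w' => w' i - ∑ j, A' j i * x j, fun z => ?_⟩
    rw [hf]
    simp only [F, add_sub_cancel_right]

lemma backward_dir (M : FinMatroid m) (hrank : M.rank Finset.univ = k)
    (f : ((Fin m → ZMod 2) × (Fin k → ZMod 2)) →ₗ[ZMod 2] (Fin m → ZMod 2))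
    (hs : SolvesIM M ⇑f) : M.RepresentableF2 := by
  classical
  obtain ⟨hR1, hR2, hR3⟩ := hs
  let L1 : (Fin m → ZMod 2) →ₗ[ZMod 2] (Fin m → ZMod 2) := f ∘ₗ LinearMap.inl _ _ _
  let N : (Fin k → ZMod 2) →ₗ[ZMod 2] (Fin m → ZMod 2) := f ∘ₗ LinearMap.inr _ _ _
  have hsplit : ∀ z : (Fin m → ZMod 2) × (Fin k → ZMod 2), f z = L1 z.1 + N z.2 := by
    intro z
    have hz : z = ((z.1, 0) + (0, z.2) : (Fin m → ZMod 2) × (Fin k → ZMod 2)) := by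
      ext <;> simp
    rw [show f z = f ((z.1, 0) + (0, z.2)) from congrArg f hz, map_add]
    rfl
  have hL1inj : Function.Injective L1 := by
    intro y y' h
    funext i
    obtain ⟨ψ, hψ⟩ := hR3 i
    have h1 := hψ (y, 0)
    have h2 := hψ (y', 0)
    have hfy : f (y, 0) = f (y', 0) := by
      rw [hsplit (y, 0), hsplit (y', 0)]
      show L1 y + N 0 = L1 y' + N 0
      rw [h]
    simp only at h1 h2
    rw [hfy] at h1
    rw [← h1, ← h2]
  have hL1surj : Function.Surjective L1 :=
    LinearMap.injective_iff_surjective.mp hL1inj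
  let L1e : (Fin m → ZMod 2) ≃ₗ[ZMod 2] (Fin m → ZMod 2) :=
    LinearEquiv.ofBijective L1 ⟨hL1inj, hL1surj⟩
  have hL1L : ∀ v, L1 (L1e.symm v) = v := fun v => L1e.apply_symm_apply v
  let Nn : (Fin k → ZMod 2) →ₗ[ZMod 2] (Fin m → ZMod 2) := L1e.symm.toLinearMap ∘ₗ N
  have hNnN : ∀ x, Nn x = L1e.symm (N x) := fun x => rfl
  let A : Matrix (Fin k) (Fin m) (ZMod 2) := Matrix.of fun j i => Nn (Pi.single j 1) i
  have hNn : ∀ (x : Fin k → ZMod 2) (i : Fin m), Nn x i = ∑ j, A j i * x j :=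
    fun x i => pi_linear_eq_sum Nn x i
  -- K2 : injectivity on bases
  have hBinj : ∀ B : Finset (Fin m), M.IsBasis B →
      Function.Injective (fun x : Fin k → ZMod 2 =>
        fun i : {i // i ∈ B} => Nn x (i : Fin m)) := by
    intro B hB x x' hxx
    funext j
    obtain ⟨ψ, hψ⟩ := hR1 B hB j
    have h1 := hψ (0, x)
    have h2 := hψ ((L1e.symm (N x - N x') : Fin m → ZMod 2), x')
    have hfz1 : f (0, x) = N x := by
      rw [hsplit]; show L1 0 + N x = N x; rw [map_zero, zero_add]
    have hfz2 : f ((L1e.symm (N x - N x') : Fin m → ZMod 2), x') = N x := by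
      rw [hsplit]
      show L1 (L1e.symm (N x - N x')) + N x' = N x
      rw [hL1L, sub_add_cancel]
    have hdiff : (L1e.symm (N x - N x') : Fin m → ZMod 2) = Nn x - Nn x' := by
      rw [map_sub]; rfl
    have hside : (fun i : {i // i ∈ B} =>
        (L1e.symm (N x - N x') : Fin m → ZMod 2) (i : Fin m))
        = (fun i : {i // i ∈ B} => ((0, x).1 : Fin m → ZMod 2) (i : Fin m)) := by
      funext i
      rw [hdiff, Pi.sub_apply]
      have hx := congrFun hxx i
      simp only at hx
      rw [hx, sub_self]
      rfl
    simp only at h1 h2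
    rw [hfz1] at h1
    rw [hfz2, hside] at h2
    rw [← h1, ← h2]
  -- K1 : circuit column relation
  have hcol : ∀ C : Finset (Fin m), M.IsCircuit C → ∀ a ∈ C,
      ∃ c : ZMod 2, Aᵀ a = c • ∑ i ∈ C.erase a, Aᵀ i := by
    intro C hC a ha
    let φa : (Fin k → ZMod 2) →ₗ[ZMod 2] ZMod 2 := LinearMap.proj a ∘ₗ Nn
    let φs : (Fin k → ZMod 2) →ₗ[ZMod 2] ZMod 2 :=
      ∑ i ∈ C.erase a, LinearMap.proj i ∘ₗ Nn
    have hφa : ∀ x, φa x = Nn x a := fun x => rfl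
    have hφs : ∀ x, φs x = ∑ i ∈ C.erase a, Nn x i := by
      intro x
      show (∑ i ∈ C.erase a, LinearMap.proj i ∘ₗ Nn) x = _
      rw [LinearMap.sum_apply]
      rfl
    have hker : ∀ x, φs x = 0 → φa x = 0 := by
      intro x hx
      obtain ⟨ψ, hψ⟩ := hR2 C hC a ha
      have h1 := hψ (0, x)
      have h2 := hψ ((L1e.symm (N x) : Fin m → ZMod 2), 0)
      have hfz1 : f (0, x) = N x := by
        rw [hsplit]; show L1 0 + N x = N x; rw [map_zero, zero_add]
      have hfz2 : f ((L1e.symm (N x) : Fin m → ZMod 2), 0) = N x := by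
        rw [hsplit]
        show L1 (L1e.symm (N x)) + N 0 = N x
        rw [hL1L, map_zero, add_zero]
      have hside2 : ∑ i ∈ C.erase a, (L1e.symm (N x) : Fin m → ZMod 2) i = 0 := by
        show ∑ i ∈ C.erase a, Nn x i = 0
        rw [← hφs x]; exact hx
      have e1 : ψ 0 (N x) = 0 := by
        have h1' : ψ (∑ i ∈ C.erase a, (0 : Fin m → ZMod 2) i) (f (0, x))
            = (0 : Fin m → ZMod 2) a := h1
        have hz1side : (∑ i ∈ C.erase a, ((0 : Fin m → ZMod 2)) i) = 0 := by simp
        rw [hz1side, hfz1] at h1'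
        simpa using h1'
      have e2 : ψ (∑ i ∈ C.erase a, (L1e.symm (N x) : Fin m → ZMod 2) i) (f (L1e.symm (N x), 0))
          = (L1e.symm (N x) : Fin m → ZMod 2) a := h2
      rw [hside2, hfz2] at e2
      show Nn x a = 0
      show (L1e.symm (N x) : Fin m → ZMod 2) a = 0
      rw [← e2, e1]
    by_cases hall : ∀ x, φs x = 0
    · refine ⟨0, ?_⟩
      funext j
      have : Aᵀ a j = φa (Pi.single j 1) := rfl
      rw [this, hker _ (hall _), Pi.smul_apply, smul_eq_mul, zero_mul]
    · push_neg at hall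
      obtain ⟨x1, hx1⟩ := hall
      have hx1' : φs x1 = 1 := by
        have : ∀ u : ZMod 2, u ≠ 0 → u = 1 := by decide
        exact this _ hx1
      refine ⟨φa x1, ?_⟩
      have key : ∀ x, φa x = φa x1 * φs x := by
        intro x
        have h0 : φs (x - φs x • x1) = 0 := by
          rw [map_sub, _root_.map_smul, smul_eq_mul, hx1', mul_one, sub_self]
        have h1 := hker _ h0
        rw [map_sub, _root_.map_smul, smul_eq_mul, sub_eq_zero] at h1
        rw [h1, mul_comm]
      funext j
      have hL : Aᵀ a j = φa (Pi.single j 1) := rfl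
      rw [hL, key, Pi.smul_apply, smul_eq_mul, Finset.sum_apply (g := fun i => Aᵀ i), hφs]
      congr 1
  -- the representation
  refine ⟨k, A, fun S => ?_⟩
  rw [rank_submatrix_eq_finrank]
  obtain ⟨I, hIS, hIind, hIcard⟩ := M.exists_indep_card_eq_rank S
  obtain ⟨B, hIB, hBbasis, hBrank⟩ := M.exists_basis_superset hIind
  have hcardB : Fintype.card {i // i ∈ B} = k := by
    rw [Fintype.card_coe, hBrank, hrank]
  have hmapeq : (fun x : Fin k → ZMod 2 => fun i : {i // i ∈ B} => Nn x (i : Fin m))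
      = ⇑(Matrix.of fun i : {i // i ∈ B} => Aᵀ (i : Fin m)).mulVecLin := by
    funext x
    funext i
    rw [hNn]
    simp only [Matrix.mulVecLin_apply, Matrix.mulVec, dotProduct, Matrix.of_apply]
    rfl
  have hLIB : LinearIndependent (ZMod 2) (fun i : {i // i ∈ B} => Aᵀ (i : Fin m)) := by
    rw [li_iff_inj hcardB]
    rw [← hmapeq]
    exact hBinj B hBbasis
  let ι : {i // i ∈ I} → {i // i ∈ B} := fun i => ⟨(i : Fin m), hIB i.2⟩
  have hιinj : Function.Injective ι := by
    intro u v huv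
    have : ((ι u : {i // i ∈ B}) : Fin m) = ((ι v : {i // i ∈ B}) : Fin m) :=
      congrArg Subtype.val huv
    exact Subtype.ext this
  have hLII : LinearIndependent (ZMod 2) (fun i : {i // i ∈ I} => Aᵀ (i : Fin m)) :=
    hLIB.comp ι hιinj
  have hspan : span (ZMod 2) (Aᵀ '' ↑S) = span (ZMod 2) (Aᵀ '' ↑I) := by
    apply le_antisymm
    · rw [span_le]
      rintro w ⟨a, haS, rfl⟩
      by_cases haI : a ∈ I
      · exact subset_span (Set.mem_image_of_mem _ haI)
      · have hdep : ¬ M.Indep (insert a I) := by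
          intro hind
          have hle := M.card_le_rank
            (Finset.insert_subset (by exact_mod_cast haS) hIS) hind
          rw [Finset.card_insert_of_notMem haI] at hle
          omega
        obtain ⟨C, hCsub, hCcirc, haC⟩ := M.exists_circuit_insert hIind hdep
        obtain ⟨c, hc⟩ := hcol C hCcirc a haC
        rw [SetLike.mem_coe, hc]
        refine Submodule.smul_mem _ _ (Submodule.sum_mem _ fun i hi => ?_)
        refine subset_span (Set.mem_image_of_mem _ ?_)
        have hmem := hCsub (Finset.mem_of_mem_erase hi)
        rcases Finset.mem_insert.mp hmem with h | h
        · exact absurd h (Finset.ne_of_mem_erase hi)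
        · exact_mod_cast h
    · exact span_mono (Set.image_mono (Finset.coe_subset.mpr hIS))
  have hfr : finrank (ZMod 2) (span (ZMod 2) (Aᵀ '' ↑I)) = I.card := by
    rw [← range_sub_eq_image Aᵀ I, finrank_span_eq_card hLII, Fintype.card_coe]
  rw [hspan, hfr, hIcard]

end Main

/-- A matroid `M` of rank `k` on `{y_1, …, y_m}` is representable over
`F₂` iff the generalized index coding problem `I_M` has a perfect scalar linear index
code over `F₂` (a linear index code of length `m` and dimension `1` solving `I_M`). -/
theorem stmt_2 (m k : ℕ) (M : FinMatroid m) (hrank : M.rank Finset.univ = k) :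
    M.RepresentableF2 ↔
    ∃ f : ((Fin m → ZMod 2) × (Fin k → ZMod 2)) →ₗ[ZMod 2] (Fin m → ZMod 2),
      SolvesIM M ⇑f := by
  constructor
  · exact forward_dir M hrank
  · rintro ⟨f, hf⟩
    exact backward_dir M hrank f hf
end

section
/- Let C ∈ F_2^{k×m} and define f : F_2^{m+k} → F_2^m by f(y,ξ) = y + ξ·C. Let i_1,…,i_c (c ≥ 1) be distinct indices in {1,…,m}. If there exists a function ψ : F_2 × F_2^m → F_2 with ψ(Σ_{j=2}^c y_{i_j}, f(y,ξ)) = y_{i_1} for all (y,ξ) ∈ F_2^{m+k}, then either C_{i_1} = Σ_{j=2}^c C_{i_j} or C_{i_1} = 0, where C_t denotes the t-th column of C. -/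
/-- Existence of a separating functional over `F₂`. -/
lemma exists_xi (k : ℕ) (v w : Fin k → ZMod 2) (hw0 : w ≠ 0) (hwv : w ≠ v) :
    ∃ ξ : Fin k → ZMod 2, (∑ s, ξ s * v s = 0) ∧ (∑ s, ξ s * w s = 1) := by
  have hz : ∀ x : ZMod 2, x = 0 ∨ x = 1 := by decide
  by_cases hA : ∃ s, v s = 0 ∧ w s = 1
  · obtain ⟨s, hv, hw⟩ := hA
    refine ⟨fun t => if t = s then 1 else 0, ?_, ?_⟩ <;>
      simp [ite_mul, Finset.sum_ite_eq', hv, hw]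
  · push_neg at hA
    -- every coordinate where w is 1 has v = 1
    have himp : ∀ s, w s = 1 → v s = 1 := by
      intro s hws
      rcases hz (v s) with h | h
      · exact absurd hws (hA s h)
      · exact h
    obtain ⟨s, hs⟩ : ∃ s, w s ≠ 0 := by
      by_contra h; push_neg at h; exact hw0 (funext h)
    have hws : w s = 1 := (hz (w s)).resolve_left hs
    have hvs : v s = 1 := himp s hws
    obtain ⟨t, ht⟩ : ∃ t, w t ≠ v t := by
      by_contra h; push_neg at h; exact hwv (funext h)
    have hwt : w t = 0 := by
      rcases hz (w t) with h | h
      · exact h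
      · exact absurd (h.trans (himp t h).symm) ht
    have hvt : v t = 1 := by
      rcases hz (v t) with h | h
      · exact absurd (hwt.trans h.symm) ht
      · exact h
    have hst : t ≠ s := by
      intro h; rw [h, hws] at hwt; exact one_ne_zero hwt
    refine ⟨(fun u => if u = s then 1 else 0) + (fun u => if u = t then 1 else 0), ?_, ?_⟩ <;>
      simp [add_mul, Finset.sum_add_distrib, ite_mul, Finset.sum_ite_eq', hvs, hvt, hws, hwt,
        hst] <;> decide

/-- Decodability of a circuit receiver over `F₂` forces a linear
relation among columns of `C`. Here the `c ≥ 1` distinct indices `i_1, …, i_c` of the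
natural-language statement are given as an injective map `idx : Fin (c + 1) → Fin m`,
with `idx 0` playing the role of `i_1` and `idx j`, `j ≠ 0`, the roles of `i_2, …, i_c`. -/
theorem stmt_5 (k m c : ℕ) (C : Matrix (Fin k) (Fin m) (ZMod 2))
    (idx : Fin (c + 1) → Fin m) (hidx : Function.Injective idx)
    (hdec : ∃ ψ : ZMod 2 → (Fin m → ZMod 2) → ZMod 2,
      ∀ (y : Fin m → ZMod 2) (ξ : Fin k → ZMod 2),
        ψ (∑ j ∈ Finset.univ.erase (0 : Fin (c + 1)), y (idx j))
          (y + Matrix.vecMul ξ C) = y (idx 0)) :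
    (fun s => C s (idx 0)) =
      (∑ j ∈ Finset.univ.erase (0 : Fin (c + 1)), fun s => C s (idx j)) ∨
    (fun s => C s (idx 0)) = (0 : Fin k → ZMod 2) := by
  by_contra hcon
  push_neg at hcon
  obtain ⟨hne, hne0⟩ := hcon
  obtain ⟨ψ, hψ⟩ := hdec
  set w : Fin k → ZMod 2 := fun s => C s (idx 0) with hw
  set v : Fin k → ZMod 2 := fun s => ∑ j ∈ Finset.univ.erase (0 : Fin (c + 1)), C s (idx j)
    with hv
  have hwv : w ≠ v := by
    intro h; apply hne; rw [h]
    ext s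
    simp [hv, Finset.sum_apply]
  obtain ⟨ξ, hξv, hξw⟩ := exists_xi k v w hne0 hwv
  -- decoder at y = 0, ξ = 0
  have h0 : ψ 0 0 = 0 := by
    have := hψ 0 0
    simpa using this
  -- decoder at y = ξ C
  have h1 := hψ (Matrix.vecMul ξ C) ξ
  have hsum : (∑ j ∈ Finset.univ.erase (0 : Fin (c + 1)),
      Matrix.vecMul ξ C (idx j)) = 0 := by
    have : (∑ j ∈ Finset.univ.erase (0 : Fin (c + 1)), Matrix.vecMul ξ C (idx j))
        = ∑ s, ξ s * v s := by
      simp only [Matrix.vecMul, dotProduct, hv, Finset.mul_sum]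
      rw [Finset.sum_comm]
    rw [this, hξv]
  have hzero : Matrix.vecMul ξ C + Matrix.vecMul ξ C = 0 := by
    ext t
    have : ∀ x : ZMod 2, x + x = 0 := by decide
    simpa using this _
  have hval : Matrix.vecMul ξ C (idx 0) = 1 := by
    simpa [Matrix.vecMul, dotProduct, hw] using hξw
  rw [hsum, hzero, hval] at h1
  rw [h0] at h1
  exact zero_ne_one h1
end

section
/- Let C ∈ F_2^{k×m} and define f : F_2^{m+k} → F_2^m by f(y,ξ) = y + ξ·C. Let B ⊆ {1,…,m} with |B| = k. Then the following are equivalent: (i) for every j ∈ {1,…,k} there exists a function ψ_j : F_2^B × F_2^m → F_2 with ψ_j((y_i)_{i∈B}, f(y,ξ)) = ξ_j for all (y,ξ); (ii) the k×k submatrix C_B of C formed by the columns indexed by B is invertible. -/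
/-- For the scalar linear code `f (y, ξ) = y + ξ·C` over `F₂` and a
`k`-element set `B` of column indices, the receivers `(x_j, B)` can all decode if and
only if the `k × k` submatrix `C_B` (columns of `C` indexed by `B`) is invertible. -/
theorem stmt_6 (k m : ℕ) (C : Matrix (Fin k) (Fin m) (ZMod 2))
    (B : Finset (Fin m)) (hB : B.card = k) :
    (∀ j : Fin k, ∃ ψ : ({i // i ∈ B} → ZMod 2) → (Fin m → ZMod 2) → ZMod 2,
      ∀ (y : Fin m → ZMod 2) (ξ : Fin k → ZMod 2),
        ψ (fun i => y i) (y + Matrix.vecMul ξ C) = ξ j) ↔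
    IsUnit (C.submatrix id (fun j : Fin k => ((B.orderIsoOfFin hB j : {i // i ∈ B}) : Fin m))) := by
  set e : Fin k → Fin m := fun j => ((B.orderIsoOfFin hB j : {i // i ∈ B}) : Fin m) with he
  set D : Matrix (Fin k) (Fin k) (ZMod 2) := C.submatrix id e with hD
  have key : ∀ ξ : Fin k → ZMod 2, ∀ i : Fin k,
      Matrix.vecMul ξ D i = Matrix.vecMul ξ C (e i) := by
    intro ξ i
    simp [hD, Matrix.vecMul, dotProduct]
  constructor
  · intro h
    rw [← Matrix.vecMul_injective_iff_isUnit]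
    rw [Function.Injective]
    intro a b hab
    -- suffices to show: vecMul ξ D = 0 → ξ = 0
    have main : ∀ ξ : Fin k → ZMod 2, Matrix.vecMul ξ D = 0 → ξ = 0 := by
      intro ξ hξ
      funext j
      obtain ⟨ψ, hψ⟩ := h j
      have h1 := hψ 0 0
      have h2 := hψ (-(Matrix.vecMul ξ C)) ξ
      simp only [neg_add_cancel, Matrix.zero_vecMul, add_zero, zero_add] at h1 h2
      have hyB : (fun i : {i // i ∈ B} => (-(Matrix.vecMul ξ C)) (i : Fin m))
          = (fun i : {i // i ∈ B} => (0 : Fin m → ZMod 2) (i : Fin m)) := by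
        funext i
        have hei : e ((B.orderIsoOfFin hB).symm i) = (i : Fin m) :=
          congrArg Subtype.val ((B.orderIsoOfFin hB).apply_symm_apply i)
        rw [← hei]
        simp only [Pi.neg_apply, Pi.zero_apply, ← key, hξ, Pi.zero_apply, neg_zero]
      rw [hyB] at h2
      rw [h2] at h1
      simp [h1]
    have := main (a - b) (by
      rw [Matrix.sub_vecMul, hab, sub_self])
    have := sub_eq_zero.mp this
    exact this
  · intro hU
    have hdet : IsUnit D.det := (Matrix.isUnit_iff_isUnit_det D).mp hU
    have hinv : D * D⁻¹ = 1 := Matrix.mul_nonsing_inv D hdet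
    intro j
    refine ⟨fun yB z => Matrix.vecMul
      (fun i => z (e i) - yB (B.orderIsoOfFin hB i)) D⁻¹ j, ?_⟩
    intro y ξ
    have : (fun i => (y + Matrix.vecMul ξ C) (e i)
        - (fun i : {i // i ∈ B} => y (i : Fin m)) (B.orderIsoOfFin hB i))
        = Matrix.vecMul ξ D := by
      funext i
      have he2 : ((B.orderEmbOfFin hB) i : Fin m) = e i :=
        (congrArg Subtype.val rfl : _)
      simp only [Pi.add_apply, key ξ i]
      have : ((B.orderIsoOfFin hB i : {i // i ∈ B}) : Fin m) = e i := rfl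
      rw [this]
      ring
    beta_reduce
    rw [this, Matrix.vecMul_vecMul, hinv, Matrix.vecMul_one]
end

section
/- Let F_q be a finite field and n, m, l, t positive integers. Suppose f : (F_q^n)^m → F_q^l is any function, H ⊆ {1,…,m}, and j_1,…,j_t are t distinct indices not in H such that for every s ∈ {1,…,t} there exists a function ψ_s with ψ_s((x_i)_{i∈H}, f(x)) = x_{j_s} for all x ∈ (F_q^n)^m. Then l ≥ n·t. In particular, for an index coding problem in which μ receivers share the same side-information set H and demand μ distinct messages outside H, every index code of dimension n and length l satisfies l/n ≥ μ. -/
/-- If `t` distinct messages outside the common side-information set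
`H` can each be decoded from the messages in `H` together with the output of an index
code `f` of length `l` and dimension `n` over a finite field, then `l ≥ n·t`.  (In
particular, `l/n ≥ μ` for `μ` receivers sharing the same side information.) -/
theorem stmt_10 (F : Type*) [Field F] [Fintype F] (n m l t : ℕ)
    (hn : 0 < n) (hm : 0 < m) (hl : 0 < l) (ht : 0 < t)
    (f : (Fin m → Fin n → F) → (Fin l → F))
    (H : Finset (Fin m)) (j : Fin t → Fin m)
    (hj : Function.Injective j) (hjH : ∀ s : Fin t, j s ∉ H)
    (hdec : ∀ s : Fin t, ∃ ψ : ({i // i ∈ H} → Fin n → F) → (Fin l → F) → (Fin n → F),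
      ∀ x : Fin m → Fin n → F, ψ (fun i => x i) (f x) = x (j s)) :
    n * t ≤ l := by
  classical
  have hq : 1 < Fintype.card F := Fintype.one_lt_card
  set ext : (Fin t → Fin n → F) → (Fin m → Fin n → F) := fun y i =>
    if h : ∃ s, j s = i then y h.choose else 0 with hextdef
  have hext : ∀ y s, ext y (j s) = y s := by
    intro y s
    have h : ∃ s', j s' = j s := ⟨s, rfl⟩
    simp only [hextdef, dif_pos h]
    rw [hj h.choose_spec]
  have hextH : ∀ y, ∀ i ∈ H, ext y i = 0 := by
    intro y i hi
    have hne : ¬ ∃ s, j s = i := by rintro ⟨s, rfl⟩; exact hjH s hi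
    simp [hextdef, hne]
  choose ψ hψ using hdec
  have hinj : Function.Injective (fun y => f (ext y)) := by
    intro y y' hfe
    simp only at hfe
    funext s
    have h1 := hψ s (ext y)
    have h2 := hψ s (ext y')
    rw [hext] at h1
    rw [hext] at h2
    have hres : (fun i : {i // i ∈ H} => ext y i) = fun i : {i // i ∈ H} => ext y' i := by
      funext i; rw [hextH y i i.2, hextH y' i i.2]
    rw [← h1, ← h2, hres, hfe]
  have hcard := Fintype.card_le_of_injective _ hinj
  have hc1 : Fintype.card (Fin t → Fin n → F) = Fintype.card F ^ (n * t) := by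
    simp [Fintype.card_fun, ← pow_mul, Nat.mul_comm]
  have hc2 : Fintype.card (Fin l → F) = Fintype.card F ^ l := by
    simp [Fintype.card_fun]
  rw [hc1, hc2] at hcard
  exact (Nat.pow_le_pow_iff_right hq).mp hcard
end

section
/- Let ρ be a discrete polymatroid rank function on {1,…,r} with k = ρ({1,…,r}), let I_D be the generalized index coding problem constructed from ρ over F_q with messages of dimension n, and let t = k + Σ_{i=1}^r ρ({i}) be the total number of messages. Then every (not necessarily linear) index code f : (F_q^n)^t → F_q^l solving I_D satisfies l ≥ n·Σ_{i=1}^r ρ({i}); that is, the minimum possible length of an index code of dimension n for I_D is n·Σ_{i=1}^r ρ({i}). -/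
/-- Every (not necessarily linear) index code of dimension `n` and
length `l` over a finite field solving the problem `I_D` constructed from a discrete
polymatroid rank function `ρ` satisfies `l ≥ n · Σ_i ρ {i}`. -/
theorem stmt_11 (F : Type*) [Field F] [Fintype F] (r n l : ℕ) (hn : 0 < n)
    (ρ : Finset (Fin r) → ℕ) (hρ : DPRankFn ρ)
    (f : DPMsg ρ n F → (Fin l → F)) (hf : SolvesDP ρ f) :
    n * ∑ i : Fin r, ρ {i} ≤ l := by
  obtain ⟨-, -, h3⟩ := hf
  -- choice of decoders for R3 receivers
  choose ψ hψ using h3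
  -- the map from y-part to the code output, with x-part fixed to 0, is injective
  have hinj : Function.Injective
      (fun y : (i : Fin r) → Fin (ρ {i}) → Fin n → F => f (0, y)) := by
    intro y y' h
    funext i p
    have h1 := hψ i p (0, y)
    have h2 := hψ i p (0, y')
    simp only at h1 h2
    simp only at h
    rw [← h1, ← h2, h]
  have hcard := Fintype.card_le_of_injective _ hinj
  have hdom : Fintype.card ((i : Fin r) → Fin (ρ {i}) → Fin n → F)
      = Fintype.card F ^ (n * ∑ i : Fin r, ρ {i}) := by
    rw [Fintype.card_pi]
    have : ∀ i : Fin r, Fintype.card (Fin (ρ {i}) → Fin n → F)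
        = Fintype.card F ^ (n * ρ {i}) := by
      intro i
      simp [Fintype.card_fun, ← pow_mul, Nat.mul_comm]
    simp only [this, Finset.prod_pow_eq_pow_sum, ← Finset.mul_sum]
  have hcod : Fintype.card (Fin l → F) = Fintype.card F ^ l := by
    simp [Fintype.card_fun]
  rw [hdom, hcod] at hcard
  exact (Nat.pow_le_pow_iff_right Fintype.one_lt_card).mp hcard
end

section
/- Let M = U_{2,4} be the uniform matroid of rank 2 on the ground set {y_1, y_2, y_3, y_4} (every subset of size at most 2 is independent). Then the generalized index coding problem I_M constructed from M — with messages {y_1,y_2,y_3,y_4,x_1,x_2} over F_2 and receivers R1 = {(x_i, {y_a, y_b}) : {a,b} a 2-subset of {1,2,3,4}, i ∈ {1,2}}, R2 = {(y_a, y_b + y_c) : {a,b,c} a 3-subset of {1,2,3,4}, a ∈ {a,b,c}} (for each 3-subset and each of its elements, a receiver demanding that element with side information the sum of the other two), and R3 = {(y_i, {x_1, x_2}) : i ∈ {1,2,3,4}} — has no perfect scalar linear index code over F_2: no linear map f : F_2^6 → F_2^4 solves I_M. -/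
/-- The message tuples of the problem `I_{U_{2,4}}`: the matroid messages
`y : Fin 4 → ZMod 2` and the extra messages `x : Fin 2 → ZMod 2`. -/
abbrev MsgU24 : Type := (Fin 4 → ZMod 2) × (Fin 2 → ZMod 2)

/-- `f` solves the generalized index coding problem `I_{U_{2,4}}` constructed from the
uniform matroid `U_{2,4}` (bases = 2-subsets, circuits = 3-subsets of `{y_1,…,y_4}`). -/
def SolvesU24 (f : MsgU24 → (Fin 4 → ZMod 2)) : Prop :=
  -- R1: for every basis {y_a, y_b} (a ≠ b) and every i, decode x_i from (y_a, y_b, f)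
  (∀ a b : Fin 4, a ≠ b → ∀ i : Fin 2,
    ∃ ψ : ZMod 2 → ZMod 2 → (Fin 4 → ZMod 2) → ZMod 2,
      ∀ z : MsgU24, ψ (z.1 a) (z.1 b) (f z) = z.2 i) ∧
  -- R2: for every circuit {y_a, y_b, y_c} (a, b, c distinct), decode y_a from
  -- the coded side information y_b + y_c together with f
  (∀ a b c : Fin 4, a ≠ b → a ≠ c → b ≠ c →
    ∃ ψ : ZMod 2 → (Fin 4 → ZMod 2) → ZMod 2,
      ∀ z : MsgU24, ψ (z.1 b + z.1 c) (f z) = z.1 a) ∧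
  -- R3: decode each y_i from (x_1, x_2) together with f
  (∀ i : Fin 4, ∃ ψ : (Fin 2 → ZMod 2) → (Fin 4 → ZMod 2) → ZMod 2,
      ∀ z : MsgU24, ψ z.2 (f z) = z.1 i)

/-- Pigeonhole in `(F₂)²`: any four vectors contain a dependent pair. -/
lemma pigeonU24 : ∀ v : Fin 4 → ZMod 2 × ZMod 2,
    ∃ a b : Fin 4, a ≠ b ∧ ∃ s t : ZMod 2, ¬(s = 0 ∧ t = 0) ∧
      s * (v a).1 + t * (v a).2 = 0 ∧ s * (v b).1 + t * (v b).2 = 0 := by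
  set_option maxRecDepth 10000 in
  decide

/-- The generalized index coding problem `I_{U_{2,4}}` constructed from
the uniform matroid `U_{2,4}` has no perfect scalar linear index code over `F₂`: no
linear map `f : F₂⁶ → F₂⁴` solves it. -/
theorem stmt_14 :
    ¬ ∃ f : MsgU24 →ₗ[ZMod 2] (Fin 4 → ZMod 2), SolvesU24 ⇑f := by
  rintro ⟨f, h1, -, h3⟩
  -- the map `z ↦ (f z, z.2)` is injective by R3
  set H : MsgU24 →ₗ[ZMod 2] (Fin 4 → ZMod 2) × (Fin 2 → ZMod 2) :=
    f.prod (LinearMap.snd (ZMod 2) _ _) with hHdef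
  have hker : ∀ z : MsgU24, H z = 0 → z = 0 := by
    intro z hz
    have hfz : f z = 0 := congrArg Prod.fst hz
    have hz2 : z.2 = 0 := congrArg Prod.snd hz
    have hz1 : z.1 = 0 := by
      funext i
      obtain ⟨ψ, hψ⟩ := h3 i
      have h0 := hψ 0
      have hzz := hψ z
      simp only [map_zero] at h0
      rw [hz2, hfz] at hzz
      simpa [← hzz] using h0
    calc z = (z.1, z.2) := rfl
    _ = 0 := by rw [hz1, hz2]; rfl
  have hinj : Function.Injective H := by
    intro z w hzw
    have := hker (z - w) (by rw [map_sub, hzw, sub_self])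
    exact sub_eq_zero.mp this
  have hcard : Fintype.card MsgU24 =
      Fintype.card ((Fin 4 → ZMod 2) × (Fin 2 → ZMod 2)) := by
    simp [Fintype.card_prod, Fintype.card_fun]
  have hsurj : Function.Surjective H :=
    ((Fintype.bijective_iff_injective_and_card H).mpr ⟨hinj, hcard⟩).2
  obtain ⟨k1, hk1⟩ := hsurj (0, ![1, 0])
  obtain ⟨k2, hk2⟩ := hsurj (0, ![0, 1])
  have hfk1 : f k1 = 0 := congrArg Prod.fst hk1
  have hk12 : k1.2 = ![1, 0] := congrArg Prod.snd hk1
  have hfk2 : f k2 = 0 := congrArg Prod.fst hk2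
  have hk22 : k2.2 = ![0, 1] := congrArg Prod.snd hk2
  obtain ⟨a, b, hab, s, t, hst, hva, hvb⟩ := pigeonU24 (fun a => (k1.1 a, k2.1 a))
  simp only at hva hvb
  set z : MsgU24 := s • k1 + t • k2 with hzdef
  have hfz : f z = 0 := by
    rw [hzdef, map_add, map_smul, map_smul, hfk1, hfk2, smul_zero, smul_zero, add_zero]
  have hz1a : z.1 a = 0 := by
    simpa [hzdef, smul_eq_mul] using hva
  have hz1b : z.1 b = 0 := by
    simpa [hzdef, smul_eq_mul] using hvb
  have hz2 : ∀ i : Fin 2, z.2 i = 0 := by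
    intro i
    obtain ⟨ψ, hψ⟩ := h1 a b hab i
    have h0 := hψ 0
    have hzz := hψ z
    simp only [map_zero] at h0
    rw [hz1a, hz1b, hfz] at hzz
    simp only [Prod.fst_zero, Prod.snd_zero, Pi.zero_apply] at h0
    rw [← hzz]
    simpa using h0
  have hs : s = 0 := by
    have := hz2 0
    simpa [hzdef, hk12, hk22, smul_eq_mul] using this
  have ht : t = 0 := by
    have := hz2 1
    simpa [hzdef, hk12, hk22, smul_eq_mul] using this
  exact hst ⟨hs, ht⟩
end
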